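/- arXiv:1509.04381 — 2 statements merged into one kernel-verified Lean document; each statement's English description precedes it below -/
import Mathlib

section
/- Optimal recovery of a matrix of positive operators with sign changes: Let X_1,…,X_m be ordered real vector spaces, Z_1,…,Z_m real vector spaces, Y_1,…,Y_l normed lattices, A_{ij} : X_j → Y_i positive linear operators, I_j : X_j → Z_j odd information maps, W_j ⊆ X_j centrally symmetric classes, and U_j ⊆ Z_j centrally symmetric sets. Suppose that for every j = 1,…,m there exist a map L_j : Z_j → X_j and an element φ_j ∈ W_j with I_j φ_j ∈ U_j such that for all x̄ ∈ W̄ and z̄ ∈ Z̄, z̄ ∈ Ī x̄ + Ū implies −φ_j ≤ x_j − L_j z_j ≤ φ_j for every j. Then for every choice of signs σ_1,…,σ_m ∈ {−1,1}, with σ := diag(σ_1,…,σ_m), the map Φ = Ā σ L̄ (where L̄ = diag(L_1,…,L_m)) is an optimal method of recovery of the operator Ā σ on the class W̄ based on information Ī with Ū-error, and E_ψ(Ā σ; W̄; Ī; Ū) = E_ψ(Ā σ; W̄; Ī; Ū; Φ) = ‖Ā φ̄‖_ψ, where φ̄ = (φ_1,…,φ_m). -/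
open scoped ENNReal

/-!
The error of `Ā σ L̄` at admissible `x̄, z̄` is `Σ_j σ_j A_{ij} (x_j - L_j z_j)`, which positivity
of the `A_{ij}` traps in the order interval `[-(Ā φ̄)_i, (Ā φ̄)_i]`; solidity of the norms and
monotonicity of `ψ` then bound the error by `ψ(‖Ā φ̄‖)`. Conversely, the information `z̄ = 0` is
consistent with both `x̄ = σ φ̄` and `-x̄`, where `Ā σ` takes the values `±Ā φ̄`, so by the
triangle inequality for `ψ` every method errs by at least `ψ(‖Ā φ̄‖)` on one of the two.
-/

open Set

structure IsMonotoneSeminorm {κ : Type*} (ψ : (κ → ℝ) → ℝ) : Prop where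
  add_le : ∀ v w, ψ (v + w) ≤ ψ v + ψ w
  smul : ∀ (c : ℝ) v, ψ (c • v) = |c| * ψ v
  mono : ∀ v w, (∀ i, 0 ≤ v i) → (∀ i, v i ≤ w i) → ψ v ≤ ψ w

namespace IsMonotoneSeminorm

variable {κ : Type*} {ψ : (κ → ℝ) → ℝ}

lemma le_max_of_two_mul_le (hψ : IsMonotoneSeminorm ψ) {u v w : κ → ℝ} (hu : ∀ i, 0 ≤ u i)
    (h : ∀ i, 2 * u i ≤ v i + w i) : ψ u ≤ max (ψ v) (ψ w) := by
  have : 2 * ψ u ≤ ψ v + ψ w := calc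
    2 * ψ u = ψ ((2 : ℝ) • u) := by rw [hψ.smul]; norm_num
    _ ≤ ψ (v + w) := hψ.mono _ _ (fun i => mul_nonneg zero_le_two (hu i)) h
    _ ≤ ψ v + ψ w := hψ.add_le v w
  linarith [le_max_left (ψ v) (ψ w), le_max_right (ψ v) (ψ w)]

lemma norm_le_max_norm_sub (hψ : IsMonotoneSeminorm ψ) {Y : κ → Type*}
    [∀ i, SeminormedAddCommGroup (Y i)] [∀ i, NormedSpace ℝ (Y i)] (y c : ∀ i, Y i) :
    ψ (fun i => ‖y i‖) ≤ max (ψ fun i => ‖y i - c i‖) (ψ fun i => ‖-y i - c i‖) :=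
  hψ.le_max_of_two_mul_le (fun i => norm_nonneg _) fun i => calc
    2 * ‖y i‖ = ‖(y i - c i) - (-y i - c i)‖ := by
      rw [sub_sub_sub_cancel_right, sub_neg_eq_add, ← two_smul ℝ, norm_smul, Real.norm_two]
    _ ≤ ‖y i - c i‖ + ‖-y i - c i‖ := norm_sub_le _ _

end IsMonotoneSeminorm

lemma smul_mem_of_sign {E : Type*} [AddCommGroup E] [Module ℝ E] {S : Set E}
    (hS : ∀ s ∈ S, -s ∈ S) {σ : ℝ} (hσ : σ = 1 ∨ σ = -1) {s : E} (hs : s ∈ S) : σ • s ∈ S := by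
  rcases hσ with rfl | rfl
  · rwa [one_smul]
  · rw [neg_one_smul]; exact hS s hs

section SymmetricInterval

variable {E : Type*} [AddCommGroup E] [PartialOrder E] [IsOrderedAddMonoid E]

lemma neg_mem_Icc_neg_self {a d : E} (hd : d ∈ Icc (-a) a) : -d ∈ Icc (-a) a := by
  rwa [Set.neg_mem_Icc_iff, neg_neg]

lemma Finset.sum_mem_Icc_neg {ι : Type*} {s : Finset ι} {a d : ι → E}
    (h : ∀ j ∈ s, d j ∈ Set.Icc (-a j) (a j)) :
    ∑ j ∈ s, d j ∈ Set.Icc (-∑ j ∈ s, a j) (∑ j ∈ s, a j) := by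
  rw [← Finset.sum_neg_distrib]
  exact ⟨Finset.sum_le_sum fun j hj => (h j hj).1, Finset.sum_le_sum fun j hj => (h j hj).2⟩

end SymmetricInterval

lemma PositiveLinearMap.map_mem_Icc_neg {R E F : Type*} [Semiring R] [AddCommGroup E]
    [PartialOrder E] [AddCommGroup F] [PartialOrder F] [Module R E] [Module R F]
    (f : E →ₚ[R] F) {a d : E} (hd : d ∈ Icc (-a) a) : f d ∈ Icc (-f a) (f a) := by
  simpa using f.monotone'.mapsTo_Icc hd

lemma norm_le_norm_of_mem_Icc_neg {Y : Type*} [NormedAddCommGroup Y] [Lattice Y] [HasSolidNorm Y]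
    [IsOrderedAddMonoid Y] {s d : Y} (h : d ∈ Icc (-s) s) : ‖d‖ ≤ ‖s‖ :=
  norm_le_norm_of_abs_le_abs <| abs_le_abs h.2 (neg_le.1 h.1)

section Recovery

variable {ι κ : Type*} {X Z : ι → Type*} {Y : κ → Type*} [∀ i, SeminormedAddCommGroup (Y i)]
  (ψ : (κ → ℝ) → ℝ) (W : ∀ j, Set (X j)) (U : ∀ j, Set (Z j)) (I : ∀ j, X j → Z j)

/-- The error `E_ψ(F; W̄; Ī; Ū; Φ)` of the recovery method `Φ`. -/
noncomputable def recoveryError [∀ j, Add (Z j)] (F : (∀ j, X j) → ∀ i, Y i)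
    (Φ : (∀ j, Z j) → ∀ i, Y i) : ℝ≥0∞ :=
  ⨆ x : ∀ j, X j, ⨆ (_ : ∀ j, x j ∈ W j), ⨆ z : ∀ j, Z j,
    ⨆ (_ : ∀ j, ∃ u ∈ U j, z j = I j (x j) + u), ENNReal.ofReal (ψ fun i => ‖F x i - Φ z i‖)

variable {ψ W U I}

lemma recoveryError_le [∀ j, Add (Z j)] {F : (∀ j, X j) → ∀ i, Y i}
    {Φ : (∀ j, Z j) → ∀ i, Y i} {r : ℝ}
    (h : ∀ x, (∀ j, x j ∈ W j) → ∀ z, (∀ j, ∃ u ∈ U j, z j = I j (x j) + u) →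
      ψ (fun i => ‖F x i - Φ z i‖) ≤ r) :
    recoveryError ψ W U I F Φ ≤ ENNReal.ofReal r :=
  iSup_le fun x => iSup_le fun hx => iSup_le fun z => iSup_le fun hz =>
    ENNReal.ofReal_le_ofReal (h x hx z hz)

lemma ofReal_le_recoveryError [∀ i, NormedSpace ℝ (Y i)] [∀ j, Neg (X j)] [∀ j, AddGroup (Z j)]
    (hψ : IsMonotoneSeminorm ψ) (hW : ∀ j, ∀ x ∈ W j, -x ∈ W j) (hU : ∀ j, ∀ u ∈ U j, -u ∈ U j)
    (hI : ∀ j x, I j (-x) = -I j x) {F : (∀ j, X j) → ∀ i, Y i} {x : ∀ j, X j}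
    (hx : ∀ j, x j ∈ W j) (hIx : ∀ j, I j (x j) ∈ U j) (hF : F (-x) = -F x)
    (Φ : (∀ j, Z j) → ∀ i, Y i) :
    ENNReal.ofReal (ψ fun i => ‖F x i‖) ≤ recoveryError ψ W U I F Φ := by
  have mem (x' : ∀ j, X j) (hx' : ∀ j, x' j ∈ W j) (hu : ∀ j, -I j (x' j) ∈ U j) :
      ENNReal.ofReal (ψ fun i => ‖F x' i - Φ 0 i‖) ≤ recoveryError ψ W U I F Φ :=
    le_iSup₂_of_le x' hx' <| le_iSup₂_of_le 0 (fun j => ⟨_, hu j, by simp⟩) le_rfl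
  have hpos := mem x hx fun j => hU j _ (hIx j)
  have hneg := mem (-x) (fun j => hW j _ (hx j)) fun j => by simpa [hI] using hIx j
  rw [hF] at hneg
  calc ENNReal.ofReal (ψ fun i => ‖F x i‖)
      ≤ ENNReal.ofReal (max (ψ fun i => ‖F x i - Φ 0 i‖) (ψ fun i => ‖-F x i - Φ 0 i‖)) :=
        ENNReal.ofReal_le_ofReal (hψ.norm_le_max_norm_sub _ _)
    _ ≤ recoveryError ψ W U I F Φ := by rw [ENNReal.ofReal_max]; exact max_le hpos hneg

end Recovery

theorem optimal_recovery_matrix_positive_operators_general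
    {m l : ℕ}
    (X : Fin m → Type*) [∀ j, AddCommGroup (X j)] [∀ j, PartialOrder (X j)]
    [∀ j, IsOrderedAddMonoid (X j)] [∀ j, Module ℝ (X j)]
    (Z : Fin m → Type*) [∀ j, AddCommGroup (Z j)]
    (Y : Fin l → Type*) [∀ i, NormedAddCommGroup (Y i)] [∀ i, Lattice (Y i)]
    [∀ i, HasSolidNorm (Y i)] [∀ i, IsOrderedAddMonoid (Y i)] [∀ i, NormedSpace ℝ (Y i)]
    (ψ : (Fin l → ℝ) → ℝ)
    (hψ_add : ∀ v w, ψ (v + w) ≤ ψ v + ψ w)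
    (hψ_smul : ∀ (c : ℝ) (v : Fin l → ℝ), ψ (c • v) = |c| * ψ v)
    (hψ_mono : ∀ v w : Fin l → ℝ, (∀ i, 0 ≤ v i) → (∀ i, v i ≤ w i) → ψ v ≤ ψ w)
    (A : ∀ (i : Fin l) (j : Fin m), X j →ₗ[ℝ] Y i)
    (hA_pos : ∀ i j (x : X j), 0 ≤ x → 0 ≤ A i j x)
    (I : ∀ j : Fin m, X j → Z j)
    (hI_odd : ∀ j (x : X j), I j (-x) = -(I j x))
    (W : ∀ j : Fin m, Set (X j))
    (hW_symm : ∀ j, ∀ x ∈ W j, -x ∈ W j)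
    (U : ∀ j : Fin m, Set (Z j))
    (hU_symm : ∀ j, ∀ u ∈ U j, -u ∈ U j)
    (L : ∀ j : Fin m, Z j → X j) (φ : ∀ j, X j)
    (hφW : ∀ j, φ j ∈ W j) (hφU : ∀ j, I j (φ j) ∈ U j)
    (hL : ∀ x : ∀ j, X j, (∀ j, x j ∈ W j) → ∀ z : ∀ j, Z j,
      (∀ j, ∃ u ∈ U j, z j = I j (x j) + u) →
      ∀ j, -φ j ≤ x j - L j (z j) ∧ x j - L j (z j) ≤ φ j)
    (σ : Fin m → ℝ) (hσ : ∀ j, σ j = 1 ∨ σ j = -1) :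
    let Aσ : (∀ j, X j) → ∀ i, Y i := fun x i => ∑ j, σ j • A i j (x j)
    let Φ₀ : (∀ j, Z j) → ∀ i, Y i := fun z i => ∑ j, σ j • A i j (L j (z j))
    let Err : ((∀ j, Z j) → ∀ i, Y i) → ℝ≥0∞ := fun Φ =>
      ⨆ x : ∀ j, X j, ⨆ (_ : ∀ j, x j ∈ W j), ⨆ z : ∀ j, Z j,
        ⨆ (_ : ∀ j, ∃ u ∈ U j, z j = I j (x j) + u),
          ENNReal.ofReal (ψ fun i => ‖Aσ x i - Φ z i‖)
    (⨅ Φ : (∀ j, Z j) → ∀ i, Y i, Err Φ) = Err Φ₀ ∧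
      Err Φ₀ = ENNReal.ofReal (ψ fun i => ‖∑ j, A i j (φ j)‖) := by
  intro Aσ Φ₀ Err
  have hψ : IsMonotoneSeminorm ψ := ⟨hψ_add, hψ_smul, hψ_mono⟩
  have upper : Err Φ₀ ≤ ENNReal.ofReal (ψ fun i => ‖∑ j, A i j (φ j)‖) := by
    refine recoveryError_le fun x hx z hz => hψ.mono _ _ (fun i => norm_nonneg _) fun i => ?_
    have hterm (j) : A i j (x j - L j (z j)) ∈ Icc (-A i j (φ j)) (A i j (φ j)) :=
      (PositiveLinearMap.mk₀ (A i j) (hA_pos i j)).map_mem_Icc_neg (hL x hx z hz j)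
    refine norm_le_norm_of_mem_Icc_neg ?_
    simpa only [Aσ, Φ₀, ← Finset.sum_sub_distrib, ← smul_sub, ← map_sub] using
      Finset.sum_mem_Icc_neg fun j _ =>
        smul_mem_of_sign (fun _ => neg_mem_Icc_neg_self) (hσ j) (hterm j)
  have lower (Φ) : ENNReal.ofReal (ψ fun i => ‖∑ j, A i j (φ j)‖) ≤ Err Φ := by
    have hAσ : Aσ (fun j => σ j • φ j) = fun i => ∑ j, A i j (φ j) := by
      funext i
      refine Finset.sum_congr rfl fun j _ => ?_
      rcases hσ j with h | h <;> simp [h]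
    have hIU (j) : I j (σ j • φ j) ∈ U j := by
      rcases hσ j with h | h <;> simp [h, hI_odd, hφU, hU_symm]
    have hodd : Aσ (-fun j => σ j • φ j) = -Aσ (fun j => σ j • φ j) := by
      funext i
      simp [Aσ, Finset.sum_neg_distrib]
    have hbound := ofReal_le_recoveryError hψ hW_symm hU_symm hI_odd
      (fun j => smul_mem_of_sign (hW_symm j) (hσ j) (hφW j)) hIU hodd Φ
    rw [hAσ] at hbound
    exact hbound
  exact ⟨le_antisymm (iInf_le _ _) (le_iInf fun Φ => upper.trans (lower Φ)),
    le_antisymm upper (lower Φ₀)⟩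

/-- Optimal recovery of a matrix of positive linear operators with sign changes
(Theorem 1 of the paper). -/
theorem optimal_recovery_matrix_positive_operators
    {m l : ℕ}
    (X : Fin m → Type*) [∀ j, AddCommGroup (X j)] [∀ j, PartialOrder (X j)]
    [∀ j, IsOrderedAddMonoid (X j)] [∀ j, Module ℝ (X j)]
    [∀ j, PosSMulStrictMono ℝ (X j)] [∀ j, PosSMulReflectLT ℝ (X j)]
    (Z : Fin m → Type*) [∀ j, AddCommGroup (Z j)] [∀ j, Module ℝ (Z j)]
    (Y : Fin l → Type*) [∀ i, NormedAddCommGroup (Y i)] [∀ i, Lattice (Y i)]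
    [∀ i, HasSolidNorm (Y i)] [∀ i, IsOrderedAddMonoid (Y i)] [∀ i, NormedSpace ℝ (Y i)]
    (ψ : (Fin l → ℝ) → ℝ)
    (hψ_nonneg : ∀ v, 0 ≤ ψ v)
    (hψ_eq_zero : ∀ v, ψ v = 0 ↔ v = 0)
    (hψ_add : ∀ v w, ψ (v + w) ≤ ψ v + ψ w)
    (hψ_smul : ∀ (c : ℝ) (v : Fin l → ℝ), ψ (c • v) = |c| * ψ v)
    (hψ_mono : ∀ v w : Fin l → ℝ, (∀ i, 0 ≤ v i) → (∀ i, v i ≤ w i) → ψ v ≤ ψ w)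
    (A : ∀ (i : Fin l) (j : Fin m), X j →ₗ[ℝ] Y i)
    (hA_pos : ∀ i j (x : X j), 0 ≤ x → 0 ≤ A i j x)
    (I : ∀ j : Fin m, X j → Z j)
    (hI_odd : ∀ j (x : X j), I j (-x) = -(I j x))
    (W : ∀ j : Fin m, Set (X j))
    (hW_symm : ∀ j, ∀ x ∈ W j, -x ∈ W j)
    (U : ∀ j : Fin m, Set (Z j))
    (hU_symm : ∀ j, ∀ u ∈ U j, -u ∈ U j)
    (L : ∀ j : Fin m, Z j → X j) (φ : ∀ j, X j)
    (hφW : ∀ j, φ j ∈ W j) (hφU : ∀ j, I j (φ j) ∈ U j)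
    (hL : ∀ x : ∀ j, X j, (∀ j, x j ∈ W j) → ∀ z : ∀ j, Z j,
      (∀ j, ∃ u ∈ U j, z j = I j (x j) + u) →
      ∀ j, -φ j ≤ x j - L j (z j) ∧ x j - L j (z j) ≤ φ j)
    (σ : Fin m → ℝ) (hσ : ∀ j, σ j = 1 ∨ σ j = -1) :
    let Aσ : (∀ j, X j) → ∀ i, Y i := fun x i => ∑ j, σ j • A i j (x j)
    let Φ₀ : (∀ j, Z j) → ∀ i, Y i := fun z i => ∑ j, σ j • A i j (L j (z j))
    let Err : ((∀ j, Z j) → ∀ i, Y i) → ℝ≥0∞ := fun Φ =>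
      ⨆ x : ∀ j, X j, ⨆ (_ : ∀ j, x j ∈ W j), ⨆ z : ∀ j, Z j,
        ⨆ (_ : ∀ j, ∃ u ∈ U j, z j = I j (x j) + u),
          ENNReal.ofReal (ψ fun i => ‖Aσ x i - Φ z i‖)
    (⨅ Φ : (∀ j, Z j) → ∀ i, Y i, Err Φ) = Err Φ₀ ∧
      Err Φ₀ = ENNReal.ofReal (ψ fun i => ‖∑ j, A i j (φ j)‖) :=
  optimal_recovery_matrix_positive_operators_general X Z Y ψ hψ_add hψ_smul hψ_mono A hA_pos I
    hI_odd W hW_symm U hU_symm L φ hφW hφU hL σ hσ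
end

section
/- Optimal recovery of a sum of positive integral operators in L¹ (ℓ¹-combined norm): For i = 1,…,l and j = 1,…,m, let (M'_j, ρ_j) be compact metric spaces with finite Borel measures μ_j, (N_i, ν_i) σ-finite measure spaces, and K_{ij} : N_i × M'_j → ℝ nonnegative ν_i×μ_j-integrable kernels defining integral operators A_{ij} x(y) := ∫_{M'_j} K_{ij}(y,t) x(t) dμ_j(t) into L¹(N_i,ν_i). For each j let ω_j be a modulus of continuity, Q_j ⊆ M'_j a finite set of n_j points, e_j ∈ [0,∞)^{n_j}, W_j := H^{ω_j}(M'_j), I_j := I_{Q_j}, U_j := U_{e_j}, τ_j := τ_{ω_j,Q_j,e_j}, and L_j := L_{ω_j,Q_j,e_j}. Let ψ be the ℓ¹-norm on ℝ^l and σ = diag(σ_1,…,σ_m) with σ_j ∈ {−1,1}. Then Φ := Ā σ L̄ with L̄ = diag(L_1,…,L_m) is an optimal method of recovery of Ā σ on W̄ = W_1×…×W_m based on information Ī with Ū-error, and E_ψ(Ā σ; W̄; Ī; Ū) = E_ψ(Ā σ; W̄; Ī; Ū; Φ) = Σ_{i=1}^l Σ_{j=1}^m ∫_{N_i} ∫_{M'_j}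 K_{ij}(y,t) τ_j(t) dμ_j(t) dν_i(y). -/
open MeasureTheory
open scoped ENNReal

/-- The function `τ_{ω,Q,e}(t) = min_j (e_j + ω(ρ(t,q_j)))`. -/
noncomputable def tauOR {M : Type*} [MetricSpace M] (ω : ℝ → ℝ) {n : ℕ}
    (q : Fin n → M) (e : Fin n → ℝ) (t : M) : ℝ :=
  ⨅ j, (e j + ω (dist t (q j)))

/-- The method of recovery `L_{ω,Q,e}` built on the generalized Voronoi cells:
`L_{ω,Q,e} z` equals `z_j` on the cell `Π_j`. -/
noncomputable def LmethOR {M : Type*} [MetricSpace M] (ω : ℝ → ℝ) {n : ℕ}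
    (q : Fin n → M) (e : Fin n → ℝ) (z : Fin n → ℝ) (t : M) : ℝ :=
  haveI := Classical.dec
  if h : (Finset.univ.filter fun j => tauOR ω q e t = e j + ω (dist t (q j))).Nonempty
  then z ((Finset.univ.filter fun j => tauOR ω q e t = e j + ω (dist t (q j))).min' h)
  else 0

/-!
On the cell of `q_k` the method `L_j` returns `z_k`, and
`|x(t) - z_k| ≤ ω(ρ(t, q_k)) + e_k = τ_j(t)`; since the kernels are nonnegative, the error of `Φ₀`
is therefore bounded pointwise by `g_i = Σ_j ∫ K_{ij} τ_j dμ_j`. Conversely `τ_j` is itself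
`ω_j`-continuous with `τ_j(q_k) ≤ e_k`, so `x = ±σ τ` are both admissible with information `z = 0`
and are mapped to `±g`; any method misses one of them by at least `‖g‖`.
-/

theorem measurable_comp_finsetFilter {α β ι : Type*} [MeasurableSpace α] [MeasurableSpace β]
    [Fintype ι] {p : α → ι → Prop} [∀ t, DecidablePred (p t)]
    (hp : ∀ j, MeasurableSet {t | p t j}) (g : Finset ι → β) :
    Measurable fun t => g (Finset.univ.filter (p t)) := by
  let : MeasurableSpace (Finset ι) := ⊤
  refine measurable_from_top.comp (measurable_to_countable' fun S => ?_)
  have hS : (fun t => Finset.univ.filter (p t)) ⁻¹' {S} = ⋂ j, {t | p t j ↔ j ∈ S} := by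
    ext t
    simp [Finset.ext_iff]
  rw [hS]
  refine MeasurableSet.iInter fun j => ?_
  by_cases hj : j ∈ S
  · simpa [hj] using hp j
  · simp only [hj, iff_false]
    exact (hp j).compl

theorem abs_mul_sub_mul_le {c a b r : ℝ} (hc : |c| ≤ 1) (h : |a - b| ≤ r) :
    |c * a - c * b| ≤ r := by
  rw [← mul_sub, abs_mul]
  exact (mul_le_of_le_one_left (abs_nonneg _) hc).trans h

section Voronoi

variable {M : Type*} [MetricSpace M] {ω : ℝ → ℝ} {n : ℕ} {q : Fin n → M} {e : Fin n → ℝ}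

theorem tauOR_le (t : M) (k : Fin n) : tauOR ω q e t ≤ e k + ω (dist t (q k)) :=
  ciInf_le (Set.finite_range _).bddBelow k

variable (ω q e) in
theorem exists_tauOR_eq (hn : 0 < n) (t : M) :
    ∃ k, tauOR ω q e t = e k + ω (dist t (q k)) :=
  have : Nonempty (Fin n) := ⟨⟨0, hn⟩⟩
  exists_eq_ciInf_of_finite.imp fun _ hk => hk.symm

theorem tauOR_apply_le (hω0 : ω 0 = 0) (k : Fin n) : tauOR ω q e (q k) ≤ e k := by
  simpa [hω0] using tauOR_le (ω := ω) (q := q) (e := e) (q k) k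

theorem tauOR_nonneg (hn : 0 < n) (he : ∀ k, 0 ≤ e k) (hω0 : ω 0 = 0)
    (hω_mono : MonotoneOn ω (Set.Ici 0)) (t : M) : 0 ≤ tauOR ω q e t := by
  obtain ⟨k, hk⟩ := exists_tauOR_eq ω q e hn t
  have : ω 0 ≤ ω (dist t (q k)) := hω_mono Set.self_mem_Ici dist_nonneg dist_nonneg
  linarith [he k]

theorem tauOR_le_add (hn : 0 < n) (hω_mono : MonotoneOn ω (Set.Ici 0))
    (hω_subadd : ∀ s t : ℝ, 0 ≤ s → 0 ≤ t → ω (s + t) ≤ ω s + ω t) (t t' : M) :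
    tauOR ω q e t ≤ tauOR ω q e t' + ω (dist t t') := by
  obtain ⟨k, hk⟩ := exists_tauOR_eq ω q e hn t'
  calc tauOR ω q e t ≤ e k + ω (dist t (q k)) := tauOR_le t k
    _ ≤ e k + ω (dist t t' + dist t' (q k)) := by
      gcongr
      exact hω_mono dist_nonneg (add_nonneg dist_nonneg dist_nonneg) (dist_triangle _ _ _)
    _ ≤ tauOR ω q e t' + ω (dist t t') := by
      linarith [hω_subadd (dist t t') (dist t' (q k)) dist_nonneg dist_nonneg]

theorem abs_tauOR_sub_le (hn : 0 < n) (hω_mono : MonotoneOn ω (Set.Ici 0))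
    (hω_subadd : ∀ s t : ℝ, 0 ≤ s → 0 ≤ t → ω (s + t) ≤ ω s + ω t) (t t' : M) :
    |tauOR ω q e t - tauOR ω q e t'| ≤ ω (dist t t') := by
  have h : tauOR ω q e t ≤ tauOR ω q e t' + ω (dist t t') :=
    tauOR_le_add hn hω_mono hω_subadd t t'
  have h' : tauOR ω q e t' ≤ tauOR ω q e t + ω (dist t t') :=
    dist_comm t t' ▸ tauOR_le_add hn hω_mono hω_subadd t' t
  exact abs_sub_le_iff.2 ⟨by linarith, by linarith⟩

theorem abs_mul_tauOR_apply_le {c : ℝ} (hc : |c| ≤ 1) (hn : 0 < n) (he : ∀ k, 0 ≤ e k)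
    (hω0 : ω 0 = 0) (hω_mono : MonotoneOn ω (Set.Ici 0)) (k : Fin n) :
    |c * tauOR ω q e (q k)| ≤ e k := by
  have hτ := tauOR_nonneg (q := q) hn he hω0 hω_mono (q k)
  rw [abs_mul, abs_of_nonneg hτ]
  exact (mul_le_of_le_one_left hτ hc).trans (tauOR_apply_le hω0 k)

theorem continuous_comp_dist (hω_cont : ContinuousOn ω (Set.Ici 0)) (c : M) :
    Continuous fun t => ω (dist t c) :=
  hω_cont.comp_continuous (continuous_id.dist continuous_const) fun _ => dist_nonneg

theorem measurable_tauOR [MeasurableSpace M] [BorelSpace M]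
    (hω_cont : ContinuousOn ω (Set.Ici 0)) : Measurable (tauOR ω q e) :=
  Measurable.iInf fun k => (continuous_const.add (continuous_comp_dist hω_cont (q k))).measurable

variable (ω q e) in
theorem exists_LmethOR_eq (hn : 0 < n) (z : Fin n → ℝ) (t : M) :
    ∃ k, LmethOR ω q e z t = z k ∧ tauOR ω q e t = e k + ω (dist t (q k)) := by
  unfold LmethOR
  split_ifs with hne
  · exact ⟨_, rfl, by simpa using Finset.min'_mem _ hne⟩
  · obtain ⟨k, hk⟩ := exists_tauOR_eq ω q e hn t
    exact absurd ⟨k, by simp [hk]⟩ hne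

theorem abs_sub_LmethOR_le (hn : 0 < n) {x : M → ℝ}
    (hx : ∀ t t' : M, |x t - x t'| ≤ ω (dist t t')) {z : Fin n → ℝ}
    (hz : ∀ k, |z k - x (q k)| ≤ e k) (t : M) :
    |x t - LmethOR ω q e z t| ≤ tauOR ω q e t := by
  obtain ⟨k, hLk, hτk⟩ := exists_LmethOR_eq ω q e hn z t
  rw [hLk, hτk]
  calc |x t - z k| ≤ |x t - x (q k)| + |x (q k) - z k| := abs_sub_le _ _ _
    _ ≤ e k + ω (dist t (q k)) := by
      rw [abs_sub_comm (x (q k))]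
      linarith [hx t (q k), hz k]

theorem abs_LmethOR_le (z : Fin n → ℝ) (t : M) : |LmethOR ω q e z t| ≤ ∑ k, |z k| := by
  unfold LmethOR
  split_ifs
  · exact Finset.single_le_sum (fun k _ => abs_nonneg (z k)) (Finset.mem_univ _)
  · rw [abs_zero]
    exact Finset.sum_nonneg fun k _ => abs_nonneg (z k)

theorem measurable_LmethOR [MeasurableSpace M] [BorelSpace M]
    (hω_cont : ContinuousOn ω (Set.Ici 0)) (z : Fin n → ℝ) : Measurable (LmethOR ω q e z) := by
  classical
  unfold LmethOR
  convert measurable_comp_finsetFilter (p := fun t j => tauOR ω q e t = e j + ω (dist t (q j)))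
    (fun j => measurableSet_eq_fun (measurable_tauOR hω_cont)
      (continuous_const.add (continuous_comp_dist hω_cont (q j))).measurable)
    fun S => if h : S.Nonempty then z (S.min' h) else 0

end Voronoi

theorem exists_abs_le_of_abs_sub_le {M : Type*} [PseudoMetricSpace M] [CompactSpace M]
    {ω : ℝ → ℝ} (hω_mono : MonotoneOn ω (Set.Ici 0)) {x : M → ℝ}
    (hx : ∀ t t' : M, |x t - x t'| ≤ ω (dist t t')) : ∃ C, ∀ t, |x t| ≤ C := by
  rcases isEmpty_or_nonempty M with _ | ⟨⟨t₀⟩⟩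
  · exact ⟨0, fun t => isEmptyElim t⟩
  refine ⟨|x t₀| + ω (Metric.diam (Set.univ : Set M)), fun t => ?_⟩
  have hdist : dist t t₀ ≤ Metric.diam (Set.univ : Set M) :=
    Metric.dist_le_diam_of_mem isCompact_univ.isBounded (Set.mem_univ _) (Set.mem_univ _)
  have := hω_mono dist_nonneg (dist_nonneg.trans hdist) hdist
  linarith [abs_sub_abs_le_abs_sub (x t) (x t₀), hx t t₀]

theorem abs_sum_mul_sub_sum_mul_le {ι : Type*} (s : Finset ι) {σ a b c : ι → ℝ}
    (hσ : ∀ j, |σ j| ≤ 1) (h : ∀ j, |a j - b j| ≤ c j) :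
    |∑ j ∈ s, σ j * a j - ∑ j ∈ s, σ j * b j| ≤ ∑ j ∈ s, c j := by
  rw [← Finset.sum_sub_distrib]
  exact (Finset.abs_sum_le_sum_abs _ _).trans
    (Finset.sum_le_sum fun j _ => abs_mul_sub_mul_le (hσ j) (h j))

theorem sum_sign_mul_integral_mul_eq {α ι : Type*} [Fintype ι] {M : ι → Type*}
    [∀ j, MeasurableSpace (M j)] {μ : ∀ j, Measure (M j)} {K : ∀ j, α → M j → ℝ} {σ : ι → ℝ}
    (hσ : ∀ j, σ j * σ j = 1) (s : ℝ) (f : ∀ j, M j → ℝ)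
    (y : α) : ∑ j, σ j * ∫ t, K j y t * (s * σ j * f j t) ∂μ j =
      s * ∑ j, ∫ t, K j y t * f j t ∂μ j := by
  simp only [Finset.mul_sum, ← integral_const_mul]
  refine Finset.sum_congr rfl fun j _ => congrArg _ (funext fun t => ?_)
  linear_combination (s * K j y t * f j t) * hσ j

theorem eLpNorm_one_sum_eq_sum_lintegral {α ι : Type*} [MeasurableSpace α] {ν : Measure α}
    (s : Finset ι) {f : ι → α → ℝ} (hf : ∀ j ∈ s, AEMeasurable (f j) ν)
    (hf₀ : ∀ j ∈ s, ∀ y, 0 ≤ f j y) :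
    eLpNorm (fun y => ∑ j ∈ s, f j y) 1 ν = ∑ j ∈ s, ∫⁻ y, ENNReal.ofReal (f j y) ∂ν := by
  rw [eLpNorm_one_eq_lintegral_enorm,
    ← lintegral_finsetSum' s fun j hj => (hf j hj).ennreal_ofReal]
  refine lintegral_congr fun y => ?_
  rw [Real.enorm_eq_ofReal (Finset.sum_nonneg fun j hj => hf₀ j hj y),
    ENNReal.ofReal_sum_of_nonneg fun j hj => hf₀ j hj y]

section IntegralOperator

variable {α β : Type*} [MeasurableSpace α] [MeasurableSpace β] {ν : Measure α} {μ : Measure β}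
  [SFinite ν] [SFinite μ]

omit [SFinite ν] [SFinite μ] in
theorem integrable_mul_comp_snd {K : α → β → ℝ}
    (hK : Integrable (fun p : α × β => K p.1 p.2) (ν.prod μ)) {c : β → ℝ} (hc : Measurable c)
    (hC : ∃ C, ∀ t, |c t| ≤ C) : Integrable (fun p : α × β => K p.1 p.2 * c p.2) (ν.prod μ) := by
  obtain ⟨C, hC⟩ := hC
  exact hK.mul_bdd (hc.comp measurable_snd).aestronglyMeasurable (ae_of_all _ fun p => hC p.2)

theorem ae_abs_integral_mul_sub_le {K : α → β → ℝ} (hK : ∀ y t, 0 ≤ K y t) {x u τ : β → ℝ}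
    (hx : Integrable (fun p : α × β => K p.1 p.2 * x p.2) (ν.prod μ))
    (hu : Integrable (fun p : α × β => K p.1 p.2 * u p.2) (ν.prod μ))
    (hτ : Integrable (fun p : α × β => K p.1 p.2 * τ p.2) (ν.prod μ))
    (hxu : ∀ t, |x t - u t| ≤ τ t) :
    ∀ᵐ y ∂ν, |∫ t, K y t * x t ∂μ - ∫ t, K y t * u t ∂μ| ≤ ∫ t, K y t * τ t ∂μ := by
  filter_upwards [hx.prod_right_ae, hu.prod_right_ae, hτ.prod_right_ae] with y hxy huy hτy
  rw [← integral_sub hxy huy]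
  refine abs_integral_le_integral_abs.trans (integral_mono (hxy.sub huy).abs hτy fun t => ?_)
  simpa only [← mul_sub, abs_mul, abs_of_nonneg (hK y t)] using
    mul_le_mul_of_nonneg_left (hxu t) (hK y t)

theorem lintegral_ofReal_integral_eq {f : α → β → ℝ}
    (hf : Integrable (fun p : α × β => f p.1 p.2) (ν.prod μ)) (hf₀ : ∀ y t, 0 ≤ f y t) :
    ∫⁻ y, ENNReal.ofReal (∫ t, f y t ∂μ) ∂ν = ∫⁻ y, ∫⁻ t, ENNReal.ofReal (f y t) ∂μ ∂ν :=
  lintegral_congr_ae <| hf.prod_right_ae.mono fun y hy =>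
    ofReal_integral_eq_lintegral_ofReal hy (ae_of_all _ (hf₀ y))

variable {ι : Type*} [Fintype ι] {M : ι → Type*} [∀ j, MeasurableSpace (M j)]
  {μ : ∀ j, Measure (M j)} [∀ j, SFinite (μ j)] {K : ∀ j, α → M j → ℝ} {σ : ι → ℝ}

theorem ae_abs_sum_integral_mul_sub_le (hK : ∀ j y t, 0 ≤ K j y t) (hσ : ∀ j, |σ j| ≤ 1)
    {x u τ : ∀ j, M j → ℝ}
    (hx : ∀ j, Integrable (fun p : α × M j => K j p.1 p.2 * x j p.2) (ν.prod (μ j)))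
    (hu : ∀ j, Integrable (fun p : α × M j => K j p.1 p.2 * u j p.2) (ν.prod (μ j)))
    (hτ : ∀ j, Integrable (fun p : α × M j => K j p.1 p.2 * τ j p.2) (ν.prod (μ j)))
    (hxu : ∀ j t, |x j t - u j t| ≤ τ j t) :
    ∀ᵐ y ∂ν, |∑ j, σ j * ∫ t, K j y t * x j t ∂μ j - ∑ j, σ j * ∫ t, K j y t * u j t ∂μ j| ≤
      ∑ j, ∫ t, K j y t * τ j t ∂μ j := by
  filter_upwards [ae_all_iff.2 fun j =>
    ae_abs_integral_mul_sub_le (hK j) (hx j) (hu j) (hτ j) (hxu j)] with y hy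
  exact abs_sum_mul_sub_sum_mul_le _ hσ hy

theorem eLpNorm_one_sum_integral_mul_eq (hK : ∀ j y t, 0 ≤ K j y t) {τ : ∀ j, M j → ℝ}
    (hτ₀ : ∀ j t, 0 ≤ τ j t)
    (hτ : ∀ j, Integrable (fun p : α × M j => K j p.1 p.2 * τ j p.2) (ν.prod (μ j))) :
    eLpNorm (fun y => ∑ j, ∫ t, K j y t * τ j t ∂μ j) 1 ν =
      ∑ j, ∫⁻ y, ∫⁻ t, ENNReal.ofReal (K j y t * τ j t) ∂μ j ∂ν := by
  rw [eLpNorm_one_sum_eq_sum_lintegral _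
    (fun j _ => (hτ j).integral_prod_left.aestronglyMeasurable.aemeasurable)
    fun j _ y => integral_nonneg fun t => mul_nonneg (hK j y t) (hτ₀ j t)]
  exact Finset.sum_congr rfl fun j _ =>
    lintegral_ofReal_integral_eq (hτ j) fun y t => mul_nonneg (hK j y t) (hτ₀ j t)

end IntegralOperator

theorem two_mul_eLpNorm_le {α : Type*} [MeasurableSpace α] {ν : Measure α} {p : ℝ≥0∞}
    (hp : 1 ≤ p) {g φ : α → ℝ} (hg : AEStronglyMeasurable g ν) (hφ : AEStronglyMeasurable φ ν) :
    2 * eLpNorm g p ν ≤ eLpNorm (g - φ) p ν + eLpNorm (-g - φ) p ν := by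
  have h : (g - φ) - (-g - φ) = (2 : ℝ) • g := by
    ext y
    simp only [Pi.sub_apply, Pi.neg_apply, Pi.smul_apply, smul_eq_mul]
    ring
  have := eLpNorm_sub_le (hg.sub hφ) (hg.neg.sub hφ) hp
  rwa [h, eLpNorm_const_smul, Real.enorm_eq_ofReal zero_le_two, ENNReal.ofReal_ofNat] at this

section WorstCaseError

variable {X Z ι : Type*} [Fintype ι] {N : ι → Type*} [∀ i, MeasurableSpace (N i)]
  {ν : ∀ i, Measure (N i)} {p : ℝ≥0∞} {P : X → Prop} {R : X → Z → Prop}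
  {T : X → ∀ i, N i → ℝ} {Φ : Z → ∀ i, N i → ℝ}

/-- The error `E_ψ(T; P; R; Φ)` of the method `Φ` for `ψ = ℓ¹`: `P` is the class of objects and
`R x z` says that `z` is admissible information about `x`. -/
noncomputable def worstCaseError (ν : ∀ i, Measure (N i)) (p : ℝ≥0∞) (P : X → Prop)
    (R : X → Z → Prop) (T : X → ∀ i, N i → ℝ) (Φ : Z → ∀ i, N i → ℝ) : ℝ≥0∞ :=
  ⨆ x, ⨆ (_ : P x), ⨆ z, ⨆ (_ : R x z), ∑ i, eLpNorm (fun y => T x i y - Φ z i y) p (ν i)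

theorem worstCaseError_le {g : ∀ i, N i → ℝ}
    (h : ∀ x, P x → ∀ z, R x z → ∀ i, ∀ᵐ y ∂ν i, |T x i y - Φ z i y| ≤ g i y) :
    worstCaseError ν p P R T Φ ≤ ∑ i, eLpNorm (g i) p (ν i) :=
  iSup₂_le fun x hx => iSup₂_le fun z hz =>
    Finset.sum_le_sum fun i _ => eLpNorm_mono_ae_real (h x hx z hz i)

theorem sum_eLpNorm_le_worstCaseError (hp : 1 ≤ p) {g : ∀ i, N i → ℝ}
    (hg : ∀ i, AEStronglyMeasurable (g i) (ν i)) {x x' : X} {z : Z} (hx : P x) (hx' : P x')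
    (hz : R x z) (hz' : R x' z) (hT : T x = g) (hT' : T x' = -g)
    (hΦ : ∀ i, AEStronglyMeasurable (Φ z i) (ν i)) :
    ∑ i, eLpNorm (g i) p (ν i) ≤ worstCaseError ν p P R T Φ := by
  have hle : ∀ x, P x → R x z →
      ∑ i, eLpNorm (T x i - Φ z i) p (ν i) ≤ worstCaseError ν p P R T Φ := fun y hy hyz =>
    le_iSup₂_of_le y hy (le_iSup₂_of_le z hyz le_rfl)
  have hle₁ := hle x hx hz
  have hle₂ := hle x' hx' hz'
  rw [hT] at hle₁
  rw [hT'] at hle₂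
  refine (ENNReal.mul_le_mul_iff_right two_ne_zero ENNReal.ofNat_ne_top).1 ?_
  calc 2 * ∑ i, eLpNorm (g i) p (ν i)
      ≤ ∑ i, (eLpNorm (g i - Φ z i) p (ν i) + eLpNorm (-g i - Φ z i) p (ν i)) := by
        rw [Finset.mul_sum]
        exact Finset.sum_le_sum fun i _ => two_mul_eLpNorm_le hp (hg i) (hΦ i)
    _ ≤ 2 * worstCaseError ν p P R T Φ := by
        rw [Finset.sum_add_distrib, two_mul]
        exact add_le_add hle₁ hle₂

theorem iInf_worstCaseError_eq_of_extremal (hp : 1 ≤ p) {g : ∀ i, N i → ℝ}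
    (hg : ∀ i, AEStronglyMeasurable (g i) (ν i)) {x x' : X} {z : Z} (hx : P x) (hx' : P x')
    (hz : R x z) (hz' : R x' z) (hT : T x = g) (hT' : T x' = -g)
    (hΦ : ∀ z i, MemLp (Φ z i) p (ν i))
    (hΦg : ∀ x, P x → ∀ z, R x z → ∀ i, ∀ᵐ y ∂ν i, |T x i y - Φ z i y| ≤ g i y) :
    (⨅ Ψ : {Ψ : Z → ∀ i, N i → ℝ // ∀ z i, MemLp (Ψ z i) p (ν i)},
        worstCaseError ν p P R T Ψ.1) = worstCaseError ν p P R T Φ ∧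
      worstCaseError ν p P R T Φ = ∑ i, eLpNorm (g i) p (ν i) := by
  have hlow : ∀ Ψ : {Ψ : Z → ∀ i, N i → ℝ // ∀ z i, MemLp (Ψ z i) p (ν i)},
      ∑ i, eLpNorm (g i) p (ν i) ≤ worstCaseError ν p P R T Ψ.1 := fun Ψ =>
    sum_eLpNorm_le_worstCaseError hp hg hx hx' hz hz' hT hT' fun i =>
      (Ψ.2 z i).aestronglyMeasurable
  have hErr : worstCaseError ν p P R T Φ = ∑ i, eLpNorm (g i) p (ν i) :=
    le_antisymm (worstCaseError_le hΦg) (hlow ⟨Φ, hΦ⟩)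
  exact ⟨le_antisymm (iInf_le_of_le ⟨Φ, hΦ⟩ le_rfl) (le_iInf fun Ψ => hErr ▸ hlow Ψ), hErr⟩

end WorstCaseError

theorem optimal_recovery_sum_integral_operators_L1_general
    {l m : ℕ}
    (M : Fin m → Type*) [∀ j, MetricSpace (M j)] [∀ j, CompactSpace (M j)]
    [∀ j, MeasurableSpace (M j)] [∀ j, BorelSpace (M j)]
    (μ : ∀ j, Measure (M j)) [∀ j, IsFiniteMeasure (μ j)]
    (N : Fin l → Type*) [∀ i, MeasurableSpace (N i)]
    (ν : ∀ i, Measure (N i)) [∀ i, SigmaFinite (ν i)]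
    (K : ∀ (i : Fin l) (j : Fin m), N i → M j → ℝ)
    (hK_nonneg : ∀ i j y t, 0 ≤ K i j y t)
    (hK_int : ∀ i j, Integrable (fun p : N i × M j => K i j p.1 p.2) ((ν i).prod (μ j)))
    (ω : Fin m → ℝ → ℝ) (hω0 : ∀ j, ω j 0 = 0)
    (hω_cont : ∀ j, ContinuousOn (ω j) (Set.Ici 0))
    (hω_mono : ∀ j, MonotoneOn (ω j) (Set.Ici 0))
    (hω_subadd : ∀ j, ∀ s t : ℝ, 0 ≤ s → 0 ≤ t → ω j (s + t) ≤ ω j s + ω j t)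
    (n : Fin m → ℕ) (hn : ∀ j, 0 < n j)
    (q : ∀ j, Fin (n j) → M j) (e : ∀ j, Fin (n j) → ℝ) (he : ∀ j k, 0 ≤ e j k)
    (σ : Fin m → ℝ) (hσ : ∀ j, σ j = 1 ∨ σ j = -1) :
    let A : ∀ (i : Fin l) (j : Fin m), (M j → ℝ) → N i → ℝ :=
      fun i j x y => ∫ t, K i j y t * x t ∂(μ j)
    let W : ∀ j, Set (M j → ℝ) := fun j =>
      {x | Measurable x ∧ ∀ t t' : M j, |x t - x t'| ≤ ω j (dist t t')}
    let τ : ∀ j, M j → ℝ := fun j => tauOR (ω j) (q j) (e j)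
    let Φ₀ : (∀ j, Fin (n j) → ℝ) → ∀ i, N i → ℝ :=
      fun z i y => ∑ j, σ j * A i j (LmethOR (ω j) (q j) (e j) (z j)) y
    let Err : ((∀ j, Fin (n j) → ℝ) → ∀ i, N i → ℝ) → ℝ≥0∞ := fun Φ =>
      ⨆ x : ∀ j, M j → ℝ, ⨆ (_ : ∀ j, x j ∈ W j), ⨆ z : ∀ j, Fin (n j) → ℝ,
        ⨆ (_ : ∀ j k, |z j k - x j (q j k)| ≤ e j k),
          ∑ i, eLpNorm (fun y => (∑ j, σ j * A i j (x j) y) - Φ z i y) 1 (ν i)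
    (⨅ Φ : {Φ : (∀ j, Fin (n j) → ℝ) → ∀ i, N i → ℝ // ∀ z i, MemLp (Φ z i) 1 (ν i)},
        Err Φ.1) = Err Φ₀ ∧
      Err Φ₀ = ∑ i, ∑ j, ∫⁻ y, ∫⁻ t, ENNReal.ofReal (K i j y t * τ j t) ∂(μ j) ∂(ν i) := by
  intro A W τ Φ₀ Err
  have hσ_abs : ∀ j, |σ j| = 1 := fun j => by rcases hσ j with h | h <;> simp [h]
  have hσ_sq : ∀ j, σ j * σ j = 1 := fun j => by rw [← abs_mul_abs_self, hσ_abs j, one_mul]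
  have hτ_nonneg : ∀ j t, 0 ≤ τ j t := fun j =>
    tauOR_nonneg (hn j) (he j) (hω0 j) (hω_mono j)
  have hτ_lip : ∀ j (t t' : M j), |τ j t - τ j t'| ≤ ω j (dist t t') := fun j =>
    abs_tauOR_sub_le (hn j) (hω_mono j) (hω_subadd j)
  have hKτ : ∀ i j,
      Integrable (fun p : N i × M j => K i j p.1 p.2 * τ j p.2) ((ν i).prod (μ j)) :=
    fun i j => integrable_mul_comp_snd (hK_int i j) (measurable_tauOR (hω_cont j))
      (exists_abs_le_of_abs_sub_le (hω_mono j) (hτ_lip j))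
  have hKL : ∀ i j z, Integrable (fun p : N i × M j =>
      K i j p.1 p.2 * LmethOR (ω j) (q j) (e j) z p.2) ((ν i).prod (μ j)) :=
    fun i j z => integrable_mul_comp_snd (hK_int i j) (measurable_LmethOR (hω_cont j) z)
      ⟨_, abs_LmethOR_le z⟩
  have hext : ∀ s : ℝ, |s| = 1 → (∀ j, (fun t => s * σ j * τ j t) ∈ W j) ∧
      ∀ j k, |(0 : ∀ j, Fin (n j) → ℝ) j k - s * σ j * τ j (q j k)| ≤ e j k := fun s hs =>
    have hsσ : ∀ j, |s * σ j| ≤ 1 := fun j => by rw [abs_mul, hs, hσ_abs j, one_mul]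
    ⟨fun j => ⟨measurable_const.mul (measurable_tauOR (hω_cont j)),
      fun t t' => abs_mul_sub_mul_le (hsσ j) (hτ_lip j t t')⟩,
      fun j k => by
        simpa using abs_mul_tauOR_apply_le (hsσ j) (hn j) (he j) (hω0 j) (hω_mono j) k⟩
  obtain ⟨hW₁, hz₁⟩ := hext 1 abs_one
  obtain ⟨hW₂, hz₂⟩ := hext (-1) (by simp)
  refine (iInf_worstCaseError_eq_of_extremal (ν := ν) (p := 1)
    (P := fun x : ∀ j, M j → ℝ => ∀ j, x j ∈ W j)
    (R := fun x (z : ∀ j, Fin (n j) → ℝ) => ∀ j k, |z j k - x j (q j k)| ≤ e j k)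
    (T := fun x i y => ∑ j, σ j * A i j (x j) y)
    (g := fun i y => ∑ j, ∫ t, K i j y t * τ j t ∂(μ j))
    le_rfl ?_ hW₁ hW₂ hz₁ hz₂ ?_ ?_ ?_ ?_).imp_right
    fun h => h.trans (Finset.sum_congr rfl fun i _ => ?_)
  · exact fun i => (integrable_finsetSum _ fun j _ =>
      (hKτ i j).integral_prod_left).aestronglyMeasurable
  · ext i y; exact (sum_sign_mul_integral_mul_eq hσ_sq 1 τ y).trans (one_mul _)
  · ext i y; exact (sum_sign_mul_integral_mul_eq hσ_sq (-1) τ y).trans (neg_one_mul _)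
  · exact fun z i => memLp_one_iff_integrable.2 <| integrable_finsetSum _ fun j _ =>
      (hKL i j (z j)).integral_prod_left.const_mul (σ j)
  · exact fun x hx z hz i => ae_abs_sum_integral_mul_sub_le (hK_nonneg i)
      (fun j => (hσ_abs j).le)
      (fun j => integrable_mul_comp_snd (hK_int i j) (hx j).1
        (exists_abs_le_of_abs_sub_le (hω_mono j) (hx j).2))
      (fun j => hKL i j (z j)) (hKτ i) fun j => abs_sub_LmethOR_le (hn j) (hx j).2 (hz j)
  exact eLpNorm_one_sum_integral_mul_eq (hK_nonneg i) hτ_nonneg (hKτ i)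

/-- Optimal recovery of a sum of positive integral operators in `L¹` with the
`ℓ¹`-combined norm (Corollary 2 of the paper). -/
theorem optimal_recovery_sum_integral_operators_L1
    {l m : ℕ}
    (M : Fin m → Type*) [∀ j, MetricSpace (M j)] [∀ j, CompactSpace (M j)]
    [∀ j, MeasurableSpace (M j)] [∀ j, BorelSpace (M j)]
    (μ : ∀ j, Measure (M j)) [∀ j, IsFiniteMeasure (μ j)]
    (N : Fin l → Type*) [∀ i, MeasurableSpace (N i)]
    (ν : ∀ i, Measure (N i)) [∀ i, SigmaFinite (ν i)]
    (K : ∀ (i : Fin l) (j : Fin m), N i → M j → ℝ)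
    (hK_nonneg : ∀ i j y t, 0 ≤ K i j y t)
    (hK_int : ∀ i j, Integrable (fun p : N i × M j => K i j p.1 p.2) ((ν i).prod (μ j)))
    (ω : Fin m → ℝ → ℝ) (hω0 : ∀ j, ω j 0 = 0)
    (hω_cont : ∀ j, ContinuousOn (ω j) (Set.Ici 0))
    (hω_mono : ∀ j, MonotoneOn (ω j) (Set.Ici 0))
    (hω_subadd : ∀ j, ∀ s t : ℝ, 0 ≤ s → 0 ≤ t → ω j (s + t) ≤ ω j s + ω j t)
    (hω_nonneg : ∀ j, ∀ s : ℝ, 0 ≤ s → 0 ≤ ω j s)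
    (n : Fin m → ℕ) (hn : ∀ j, 0 < n j)
    (q : ∀ j, Fin (n j) → M j) (e : ∀ j, Fin (n j) → ℝ) (he : ∀ j k, 0 ≤ e j k)
    (σ : Fin m → ℝ) (hσ : ∀ j, σ j = 1 ∨ σ j = -1) :
    let A : ∀ (i : Fin l) (j : Fin m), (M j → ℝ) → N i → ℝ :=
      fun i j x y => ∫ t, K i j y t * x t ∂(μ j)
    let W : ∀ j, Set (M j → ℝ) := fun j =>
      {x | Measurable x ∧ ∀ t t' : M j, |x t - x t'| ≤ ω j (dist t t')}
    let τ : ∀ j, M j → ℝ := fun j => tauOR (ω j) (q j) (e j)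
    let Φ₀ : (∀ j, Fin (n j) → ℝ) → ∀ i, N i → ℝ :=
      fun z i y => ∑ j, σ j * A i j (LmethOR (ω j) (q j) (e j) (z j)) y
    let Err : ((∀ j, Fin (n j) → ℝ) → ∀ i, N i → ℝ) → ℝ≥0∞ := fun Φ =>
      ⨆ x : ∀ j, M j → ℝ, ⨆ (_ : ∀ j, x j ∈ W j), ⨆ z : ∀ j, Fin (n j) → ℝ,
        ⨆ (_ : ∀ j k, |z j k - x j (q j k)| ≤ e j k),
          ∑ i, eLpNorm (fun y => (∑ j, σ j * A i j (x j) y) - Φ z i y) 1 (ν i)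
    (⨅ Φ : {Φ : (∀ j, Fin (n j) → ℝ) → ∀ i, N i → ℝ // ∀ z i, MemLp (Φ z i) 1 (ν i)},
        Err Φ.1) = Err Φ₀ ∧
      Err Φ₀ = ∑ i, ∑ j, ∫⁻ y, ∫⁻ t, ENNReal.ofReal (K i j y t * τ j t) ∂(μ j) ∂(ν i) :=
  optimal_recovery_sum_integral_operators_L1_general M μ N ν K hK_nonneg hK_int ω hω0 hω_cont
    hω_mono hω_subadd n hn q e he σ hσ
end
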